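/- arXiv:0901.4279 — 2 statements merged into one kernel-verified Lean document; each statement's English description precedes it below -/
import Mathlib

section
/- For μ > 3, every complex root λ of the cubic p(λ) = λ³ + 3(μ−1)λ² + (3μ² − 6μ + 2)λ + 3(μ−1)(μ−2) has strictly negative real part. -/
/-! The cubic factors as `(λ + 1) (λ² + (3μ - 4) λ + 3 (μ - 1) (μ - 2))`, and the
quadratic factor has positive coefficients, so its roots lie in the open left half-plane
(Routh–Hurwitz in degree two). -/

theorem Complex.re_neg_of_sq_add_mul_add_eq_zero {b c : ℝ} (hb : 0 < b) (hc : 0 < c) {z : ℂ}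
    (hz : z ^ 2 + b * z + c = 0) : z.re < 0 := by
  have hre : z.re * z.re - z.im * z.im + b * z.re + c = 0 := by
    simpa [sq] using congrArg Complex.re hz
  have him : z.im * (2 * z.re + b) = 0 := by
    linear_combination (by simpa [sq] using congrArg Complex.im hz :
      z.re * z.im + z.im * z.re + b * z.im = 0)
  rcases mul_eq_zero.mp him with hreal | hsum
  · rw [hreal] at hre
    by_contra! hx
    nlinarith
  · linarith

theorem stmt1 (μ : ℝ) (hμ : 3 < μ) (z : ℂ)
    (hz : z ^ 3 + 3 * ((μ : ℂ) - 1) * z ^ 2 + (3 * (μ : ℂ) ^ 2 - 6 * μ + 2) * z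
      + 3 * ((μ : ℂ) - 1) * ((μ : ℂ) - 2) = 0) :
    z.re < 0 := by
  have hfactor : (z + 1) *
      (z ^ 2 + ((3 * μ - 4 : ℝ) : ℂ) * z + ((3 * (μ - 1) * (μ - 2) : ℝ) : ℂ)) = 0 := by
    push_cast
    linear_combination hz
  rcases mul_eq_zero.mp hfactor with hlin | hquad
  · rw [eq_neg_of_add_eq_zero_left hlin]
    norm_num
  · exact Complex.re_neg_of_sq_add_mul_add_eq_zero (by linarith)
      (by nlinarith) hquad
end

section
/- The adjoint operator B* = −D_y⁴ − (1/4)y D_y has the polynomial eigenfunctions ψ*_l(y) = (1/√(l!)) Σ_{j=0}^{⌊l/4⌋} (1/j!) D_y^{4j} y^l with eigenvalues λ_l = −l/4, for each integer l ≥ 0; i.e., B*ψ*_l = −(l/4)ψ*_l. -/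
/-!
By homogeneity, `y · D^{m+1} y^l = (l - m) · D^m y^l`, so `-(1/4) y D` multiplies the term
`D^{4j} y^l / j!` of `ψ*_l` by `-(l - 4j)/4`. Since
`D^{4j+4} y^l / j! = (j + 1) · D^{4(j+1)} y^l / (j+1)!` and `D^{4(⌊l/4⌋+1)} y^l = 0`,
reindexing shows that `-D^4` multiplies the same term by `-j`. Finally `-j - (l - 4j)/4 = -l/4`.
-/

open Finset Nat
open scoped ContDiff

theorem sum_range_one_div_factorial_mul_succ {K : Type*} [Field K] [CharZero K] (a : ℕ → K)
    (N : ℕ) (ha : a (N + 1) = 0) :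
    ∑ j ∈ range (N + 1), 1 / (j ! : K) * a (j + 1) =
      ∑ j ∈ range (N + 1), (j : K) * (1 / (j ! : K) * a j) := by
  rw [sum_range_succ, ha, mul_zero, add_zero, sum_range_succ', cast_zero, zero_mul, add_zero]
  refine sum_congr rfl fun j _ => ?_
  rw [factorial_succ, cast_mul]
  field_simp

section

variable {𝕜 : Type*} [NontriviallyNormedField 𝕜]

theorem iterate_deriv_pow_eq_zero_of_lt {l m : ℕ} (h : l < m) :
    deriv^[m] (fun z : 𝕜 => z ^ l) = 0 := by
  funext y
  rw [iter_deriv_pow, prod_eq_zero (mem_range.2 h) (sub_self _), zero_mul, Pi.zero_apply]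

theorem mul_iterate_deriv_pow_succ (l m : ℕ) (y : 𝕜) :
    y * deriv^[m + 1] (fun z : 𝕜 => z ^ l) y =
      ((l : 𝕜) - m) * deriv^[m] (fun z : 𝕜 => z ^ l) y := by
  rw [iter_deriv_pow, iter_deriv_pow, prod_range_succ]
  rcases lt_or_ge m l with hml | hlm
  · obtain ⟨k, rfl⟩ := Nat.exists_eq_add_of_lt hml
    rw [show m + k + 1 - m = k + 1 by omega, show m + k + 1 - (m + 1) = k by omega, pow_succ]
    ring
  · have hz : (∏ i ∈ range m, ((l : 𝕜) - i)) * ((l : 𝕜) - m) = 0 := by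
      rw [← prod_range_succ]
      exact prod_eq_zero (mem_range.2 (Nat.lt_succ_of_le hlm)) (sub_self _)
    linear_combination (y * y ^ (l - (m + 1)) - y ^ (l - m)) * hz

theorem iterate_deriv_const_mul_sum {ι : Type*} {f : 𝕜 → 𝕜} (hf : ContDiff 𝕜 ∞ f)
    (c : 𝕜) (s : Finset ι) (a : ι → 𝕜) (n : ι → ℕ) (k : ℕ) :
    deriv^[k] (fun y => c * ∑ i ∈ s, a i * deriv^[n i] f y) =
      fun y => c * ∑ i ∈ s, a i * deriv^[n i + k] f y := by
  induction k with
  | zero => rfl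
  | succ k ih =>
    funext y
    have hdiff (i : ι) : DifferentiableAt 𝕜 (fun y => a i * deriv^[n i + k] f y) y :=
      ((hf.iterate_deriv _).differentiable (by simp) y).const_mul _
    rw [Function.iterate_succ_apply', ih, deriv_const_mul_field, deriv_fun_sum fun i _ => hdiff i]
    simp_rw [deriv_const_mul_field, ← Function.iterate_succ_apply' deriv, Nat.add_succ]

theorem neg_iterate_deriv_four_sub_quarter_mul_deriv [CharZero 𝕜] (l : ℕ) (c : 𝕜) :
    let ψ : 𝕜 → 𝕜 := fun y => c *
      ∑ j ∈ range (l / 4 + 1), (1 / (j ! : 𝕜)) * deriv^[4 * j] (fun z : 𝕜 => z ^ l) y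
    ∀ y : 𝕜, -(deriv^[4] ψ y) - (1 / 4) * y * deriv ψ y = -((l : 𝕜) / 4) * ψ y := by
  intro ψ y
  set t : ℕ → 𝕜 := fun m => deriv^[m] (fun z : 𝕜 => z ^ l) y
  have hpow : ContDiff 𝕜 ∞ fun z : 𝕜 => z ^ l := contDiff_id.pow l
  have hD4 : deriv^[4] ψ y = c * ∑ j ∈ range (l / 4 + 1), 1 / (j ! : 𝕜) * t (4 * j + 4) :=
    congrFun (iterate_deriv_const_mul_sum hpow c _ _ _ 4) y
  have hD1 : deriv ψ y = c * ∑ j ∈ range (l / 4 + 1), 1 / (j ! : 𝕜) * t (4 * j + 1) :=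
    congrFun (iterate_deriv_const_mul_sum hpow c _ _ _ 1) y
  have hshift : ∑ j ∈ range (l / 4 + 1), 1 / (j ! : 𝕜) * t (4 * j + 4) =
      ∑ j ∈ range (l / 4 + 1), (j : 𝕜) * (1 / (j ! : 𝕜) * t (4 * j)) :=
    sum_range_one_div_factorial_mul_succ (fun j => t (4 * j)) _
      (congrFun (iterate_deriv_pow_eq_zero_of_lt (by omega)) y)
  have heuler : y * ∑ j ∈ range (l / 4 + 1), 1 / (j ! : 𝕜) * t (4 * j + 1) =
      ∑ j ∈ range (l / 4 + 1), ((l : 𝕜) - 4 * j) * (1 / (j ! : 𝕜) * t (4 * j)) := by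
    rw [mul_sum]
    refine sum_congr rfl fun j _ => ?_
    rw [mul_left_comm, mul_iterate_deriv_pow_succ]
    push_cast
    ring
  have hsum : ∑ j ∈ range (l / 4 + 1), (j : 𝕜) * (1 / (j ! : 𝕜) * t (4 * j)) +
      1 / 4 * ∑ j ∈ range (l / 4 + 1), ((l : 𝕜) - 4 * j) * (1 / (j ! : 𝕜) * t (4 * j)) =
      (l : 𝕜) / 4 * ∑ j ∈ range (l / 4 + 1), 1 / (j ! : 𝕜) * t (4 * j) := by
    rw [mul_sum, mul_sum, ← sum_add_distrib]
    exact sum_congr rfl fun j _ => by ring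
  rw [hD4, hD1, hshift]
  linear_combination (-c / 4) * heuler - c * hsum

end

theorem stmt12 (l : ℕ) :
    let ψ : ℝ → ℝ := fun y => (1 / Real.sqrt (Nat.factorial l)) *
      ∑ j ∈ Finset.range (l / 4 + 1),
        (1 / (Nat.factorial j : ℝ)) * deriv^[4 * j] (fun z : ℝ => z ^ l) y
    ∀ y : ℝ, -(deriv^[4] ψ y) - (1 / 4) * y * deriv ψ y = -((l : ℝ) / 4) * ψ y :=
  neg_iterate_deriv_four_sub_quarter_mul_deriv l _
end
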